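/- arXiv:2504.07394 — 3 statements merged into one kernel-verified Lean document; each statement's English description precedes it below -/
import Mathlib

section
/- Let A be the (0,1)-adjacency matrix of a finite directed graph on N vertices. The graph contains no directed cycle (of any length, including self-loops) if and only if Tr[(I + A)^N] = N. -/
open Matrix

/-- A directed graph on `Fin N` has no directed cycle (closed walk of any length `k ≥ 1`,
including self-loops) iff `Tr[(I + A)^N] = N` for its 0/1 adjacency matrix `A`. -/
theorem stmt_3 (N : ℕ) (E : Fin N → Fin N → Prop) [DecidableRel E]
    (A : Matrix (Fin N) (Fin N) ℝ)
    (hA : ∀ i j, A i j = if E i j then 1 else 0) :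
    (¬ ∃ k : ℕ, 1 ≤ k ∧ ∃ p : Fin (k + 1) → Fin N,
        p 0 = p (Fin.last k) ∧ ∀ i : Fin k, E (p i.castSucc) (p i.succ)) ↔
      Matrix.trace ((1 + A) ^ N) = (N : ℝ) := by
  classical
  have hA0 : ∀ i j, 0 ≤ A i j := by
    intro i j; rw [hA]; split <;> norm_num
  have hAne : ∀ i j, A i j ≠ 0 ↔ E i j := by
    intro i j; rw [hA]; split <;> simp [*]
  have hpow0 : ∀ k, ∀ i j : Fin N, 0 ≤ (A ^ k) i j := by
    intro k
    induction k with
    | zero =>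
      intro i j
      simp only [pow_zero, Matrix.one_apply]
      split <;> norm_num
    | succ k ih =>
      intro i j
      rw [pow_succ, Matrix.mul_apply]
      exact Finset.sum_nonneg fun m _ => mul_nonneg (ih i m) (hA0 m j)
  have hwalk : ∀ k, ∀ i j : Fin N, (A ^ k) i j ≠ 0 ↔
      ∃ f : ℕ → Fin N, f 0 = i ∧ f k = j ∧ ∀ m < k, E (f m) (f (m + 1)) := by
    intro k
    induction k with
    | zero =>
      intro i j
      simp only [pow_zero, Matrix.one_apply]
      constructor
      · intro h
        have hij : i = j := by by_contra hne; simp [hne] at h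
        exact ⟨fun _ => i, rfl, hij, fun m hm => absurd hm (by omega)⟩
      · rintro ⟨f, h0, hk, -⟩
        have hij : i = j := by rw [← h0, ← hk]
        simp [hij]
    | succ k ih =>
      intro i j
      rw [pow_succ, Matrix.mul_apply]
      have hterm : ∀ m : Fin N, 0 ≤ (A ^ k) i m * A m j :=
        fun m => mul_nonneg (hpow0 k i m) (hA0 m j)
      have hsum : (∑ m, (A ^ k) i m * A m j) ≠ 0 ↔ ∃ m, (A ^ k) i m * A m j ≠ 0 := by
        constructor
        · intro h
          by_contra hc
          push_neg at hc
          exact h (Finset.sum_eq_zero fun m _ => hc m)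
        · rintro ⟨m, hm⟩ h
          exact hm (by
            have := (Finset.sum_eq_zero_iff_of_nonneg (fun m _ => hterm m)).mp h
            exact this m (Finset.mem_univ m))
      rw [hsum]
      constructor
      · rintro ⟨m, hm⟩
        rcases mul_ne_zero_iff.mp hm with ⟨h1, h2⟩
        obtain ⟨f, hf0, hfk, hfe⟩ := (ih i m).mp h1
        have hE : E m j := (hAne m j).mp h2
        refine ⟨fun n => if n ≤ k then f n else j, by simp [hf0], by simp, ?_⟩
        intro l hl
        rcases Nat.lt_or_ge l k with hlk | hlk
        · have h1' : l ≤ k := hlk.le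
          have h2' : l + 1 ≤ k := hlk
          simp only [h1', h2', if_pos]
          exact hfe l hlk
        · have hlk' : l = k := by omega
          subst hlk'
          simp [hfk, hE]
      · rintro ⟨f, hf0, hfk, hfe⟩
        refine ⟨f k, mul_ne_zero ?_ ?_⟩
        · exact (ih i (f k)).mpr ⟨f, hf0, rfl, fun m hm => hfe m (by omega)⟩
        · rw [hAne]
          have := hfe k (by omega)
          rwa [hfk] at this
  have htrace : ∀ M : Matrix (Fin N) (Fin N) ℝ, Matrix.trace M = ∑ i, M i i := fun M => rfl
  have htr_nonneg : ∀ k, 0 ≤ Matrix.trace (A ^ k) := by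
    intro k
    rw [htrace]
    exact Finset.sum_nonneg fun i _ => hpow0 k i i
  have htr_zero : ∀ k, Matrix.trace (A ^ k) = 0 ↔ ∀ i : Fin N, (A ^ k) i i = 0 := by
    intro k
    rw [htrace]
    rw [Finset.sum_eq_zero_iff_of_nonneg (fun i _ => hpow0 k i i)]
    simp
  -- binomial expansion
  have hexp : Matrix.trace ((1 + A) ^ N) =
      ∑ m ∈ Finset.range (N + 1), (N.choose m : ℝ) * Matrix.trace (A ^ m) := by
    rw [add_comm, (Commute.one_right A).add_pow, Matrix.trace_sum]
    refine Finset.sum_congr rfl fun m _ => ?_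
    rw [one_pow, mul_one, Matrix.trace_mul_comm, ← nsmul_eq_mul, Matrix.trace_smul,
      nsmul_eq_mul]
  have hsplit : Matrix.trace ((1 + A) ^ N) =
      (∑ i ∈ Finset.range N, (N.choose (i + 1) : ℝ) * Matrix.trace (A ^ (i + 1))) + N := by
    rw [hexp, Finset.sum_range_succ']
    congr 1
    simp [htrace, Matrix.one_apply]
  have hS0 : 0 ≤ ∑ i ∈ Finset.range N, (N.choose (i + 1) : ℝ) * Matrix.trace (A ^ (i + 1)) :=
    Finset.sum_nonneg fun i _ => mul_nonneg (by positivity) (htr_nonneg _)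
  have hiff : Matrix.trace ((1 + A) ^ N) = (N : ℝ) ↔
      ∀ i < N, Matrix.trace (A ^ (i + 1)) = 0 := by
    rw [hsplit]
    constructor
    · intro h i hi
      have hz : ∑ i ∈ Finset.range N, (N.choose (i + 1) : ℝ) * Matrix.trace (A ^ (i + 1)) = 0 := by
        linarith
      have := (Finset.sum_eq_zero_iff_of_nonneg
        (fun i _ => mul_nonneg (by positivity) (htr_nonneg _))).mp hz i (Finset.mem_range.mpr hi)
      have hcp : (0 : ℝ) < (N.choose (i + 1) : ℝ) := by
        exact_mod_cast Nat.choose_pos (by omega)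
      exact (mul_eq_zero.mp this).resolve_left (ne_of_gt hcp)
    · intro h
      have hz : ∀ i ∈ Finset.range N, (N.choose (i + 1) : ℝ) * Matrix.trace (A ^ (i + 1)) = 0 :=
        fun i hi => by rw [h i (Finset.mem_range.mp hi), mul_zero]
      rw [Finset.sum_eq_zero hz, zero_add]
  -- bridge between Fin walks and ℕ walks
  have hbridge : ∀ k : ℕ,
      (∃ p : Fin (k + 1) → Fin N, p 0 = p (Fin.last k) ∧
        ∀ i : Fin k, E (p i.castSucc) (p i.succ)) ↔
      (∃ f : ℕ → Fin N, f 0 = f k ∧ ∀ m < k, E (f m) (f (m + 1))) := by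
    intro k
    constructor
    · rintro ⟨p, hp0, hpe⟩
      refine ⟨fun n => p ⟨min n k, by omega⟩, ?_, ?_⟩
      · have h1 : (⟨min 0 k, by omega⟩ : Fin (k + 1)) = 0 := by
          ext; simp
        have h2 : (⟨min k k, by omega⟩ : Fin (k + 1)) = Fin.last k := by
          ext; simp [Fin.last]
        beta_reduce
        rw [h1, h2, hp0]
      · intro m hm
        have := hpe ⟨m, hm⟩
        have e1 : (⟨min m k, by omega⟩ : Fin (k + 1)) = (⟨m, hm⟩ : Fin k).castSucc := by
          ext; simp [Nat.min_eq_left hm.le, Fin.castSucc]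
        have e2 : (⟨min (m + 1) k, by omega⟩ : Fin (k + 1)) = (⟨m, hm⟩ : Fin k).succ := by
          ext; simp [Nat.min_eq_left hm, Fin.succ]
        beta_reduce
        rw [e1, e2]
        exact this
    · rintro ⟨f, hf0, hfe⟩
      refine ⟨fun i => f i.val, ?_, ?_⟩
      · simpa [Fin.last] using hf0
      · intro i
        simpa using hfe i.val i.isLt
  -- shortening of closed walks
  have hshort : ∀ k, 1 ≤ k →
      (∃ f : ℕ → Fin N, f 0 = f k ∧ ∀ m < k, E (f m) (f (m + 1))) →
      ∃ m, 1 ≤ m ∧ m ≤ N ∧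
        ∃ g : ℕ → Fin N, g 0 = g m ∧ ∀ l < m, E (g l) (g (l + 1)) := by
    rintro k hk ⟨f, hf0, hfe⟩
    rcases le_or_gt k N with hkN | hkN
    · exact ⟨k, hk, hkN, f, hf0, hfe⟩
    · have key : ∀ a b : ℕ, a < b → b ≤ N → f a = f b →
        ∃ m, 1 ≤ m ∧ m ≤ N ∧
          ∃ g : ℕ → Fin N, g 0 = g m ∧ ∀ l < m, E (g l) (g (l + 1)) := by
        intro a b hab hbN heq
        refine ⟨b - a, by omega, by omega, fun n => f (a + n), ?_, ?_⟩
        · beta_reduce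
          rw [Nat.add_zero, Nat.add_sub_cancel' hab.le]
          exact heq
        · intro l hl
          have : a + l < k := by omega
          have := hfe (a + l) this
          simpa [Nat.add_assoc] using this
      obtain ⟨a, ha, b, hb, hne, heq⟩ := Finset.exists_ne_map_eq_of_card_lt_of_maps_to
        (s := Finset.range (N + 1)) (t := (Finset.univ : Finset (Fin N)))
        (by simp)
        (fun x _ => Finset.mem_univ (f x))
      have haN : a ≤ N := Nat.lt_succ_iff.mp (Finset.mem_range.mp ha)
      have hbN : b ≤ N := Nat.lt_succ_iff.mp (Finset.mem_range.mp hb)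
      rcases lt_or_gt_of_ne hne with h | h
      · exact key a b h hbN heq
      · exact key b a h haN heq.symm
  rw [hiff]
  constructor
  · intro h i hi
    rw [htr_zero]
    intro v
    by_contra hv
    obtain ⟨f, hf0, hfk, hfe⟩ := (hwalk (i + 1) v v).mp hv
    exact h ⟨i + 1, by omega, (hbridge (i + 1)).mpr ⟨f, by rw [hf0, hfk], hfe⟩⟩
  · rintro h ⟨k, hk, hp⟩
    obtain ⟨m, hm1, hmN, g, hg0, hge⟩ := hshort k hk ((hbridge k).mp hp)
    have hnz : (A ^ m) (g 0) (g 0) ≠ 0 := (hwalk m (g 0) (g 0)).mpr ⟨g, rfl, hg0.symm, hge⟩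
    have hz := (htr_zero m).mp (by
      have := h (m - 1) (by omega)
      simpa [Nat.sub_add_cancel hm1] using this)
    exact hnz (hz (g 0))
end

section
/- Let A be an N×N matrix with nonnegative real entries. Then Tr[(I + A)^N] = N if and only if A is nilpotent. -/
open Matrix

section aux
variable {N : ℕ} (A : Matrix (Fin N) (Fin N) ℝ)

lemma aux_pow_nonneg (hA : ∀ i j, 0 ≤ A i j) : ∀ k i j, 0 ≤ (A ^ k) i j := by
  intro k
  induction k with
  | zero =>
    intro i j
    rw [pow_zero, Matrix.one_apply]
    split <;> norm_num
  | succ n ih =>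
    intro i j
    rw [pow_succ, Matrix.mul_apply]
    exact Finset.sum_nonneg fun k _ => mul_nonneg (ih i k) (hA k j)

lemma aux_walk_pos (hA : ∀ i j, 0 ≤ A i j) :
    ∀ n (f : ℕ → Fin N), (∀ t < n, 0 < A (f t) (f (t + 1))) →
      0 < (A ^ n) (f 0) (f n) := by
  intro n
  induction n with
  | zero =>
    intro f _
    simp [Matrix.one_apply_eq]
  | succ n ih =>
    intro f hf
    rw [pow_succ, Matrix.mul_apply]
    apply Finset.sum_pos' (fun k _ => mul_nonneg (aux_pow_nonneg A hA n _ k) (hA k _))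
    refine ⟨f n, Finset.mem_univ _, mul_pos ?_ ?_⟩
    · exact ih f fun t ht => hf t (ht.trans (Nat.lt_succ_self n))
    · exact hf n (Nat.lt_succ_self n)

lemma aux_exists_walk (hA : ∀ i j, 0 ≤ A i j) :
    ∀ n i j, 0 < (A ^ n) i j →
      ∃ f : ℕ → Fin N, f 0 = i ∧ f n = j ∧ ∀ t < n, 0 < A (f t) (f (t + 1)) := by
  intro n
  induction n with
  | zero =>
    intro i j h
    rw [pow_zero, Matrix.one_apply] at h
    have hij : i = j := by by_contra hc; simp [hc] at h
    exact ⟨fun _ => i, rfl, hij ▸ rfl, fun t ht => absurd ht (Nat.not_lt_zero t)⟩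
  | succ n ih =>
    intro i j h
    rw [pow_succ', Matrix.mul_apply] at h
    have : ∃ k, 0 < A i k * (A ^ n) k j := by
      by_contra hc
      push_neg at hc
      have : (∑ k, A i k * (A ^ n) k j) ≤ 0 :=
        Finset.sum_nonpos fun k _ => hc k
      linarith
    obtain ⟨k, hk⟩ := this
    have h1 : 0 < A i k := by
      rcases lt_or_eq_of_le (hA i k) with h' | h'
      · exact h'
      · rw [← h'] at hk; simp at hk
    have h2 : 0 < (A ^ n) k j := by
      rcases lt_or_eq_of_le (aux_pow_nonneg A hA n k j) with h' | h'
      · exact h'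
      · rw [← h'] at hk; simp at hk
    obtain ⟨g, hg0, hgn, hgs⟩ := ih k j h2
    refine ⟨fun t => match t with | 0 => i | t + 1 => g t, rfl, hgn, ?_⟩
    intro t ht
    match t with
    | 0 => simpa [hg0] using h1
    | t + 1 => exact hgs t (Nat.lt_of_succ_lt_succ ht)

lemma aux_nilpotent (hA : ∀ i j, 0 ≤ A i j)
    (htr : ∀ k, 1 ≤ k → k ≤ N → Matrix.trace (A ^ k) = 0) :
    A ^ N = 0 := by
  ext i j
  by_contra hc
  have hpos : 0 < (A ^ N) i j := by
    rcases lt_or_eq_of_le (aux_pow_nonneg A hA N i j) with h' | h'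
    · exact h'
    · exact absurd h'.symm (by simpa using hc)
  obtain ⟨f, hf0, hfN, hfs⟩ := aux_exists_walk A hA N i j hpos
  have key : ∀ s t : ℕ, s < t → t ≤ N → f s = f t → False := by
    intro s t hst htN heq
    set m := t - s with hm
    have hm1 : 1 ≤ m := by omega
    have hmN : m ≤ N := by omega
    have hwalk : 0 < (A ^ m) (f (s + 0)) (f (s + m)) := by
      apply aux_walk_pos A hA m (fun u => f (s + u))
      intro u hu
      have h1 : s + u < N := by omega
      have h2 := hfs (s + u) h1
      have h3 : s + (u + 1) = s + u + 1 := by omega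
      show 0 < A (f (s + u)) (f (s + (u + 1)))
      rw [h3]; exact h2
    have hsm : s + m = t := by omega
    rw [hsm, Nat.add_zero, ← heq] at hwalk
    have htrpos : 0 < Matrix.trace (A ^ m) := by
      rw [Matrix.trace]
      apply Finset.sum_pos' (fun k _ => aux_pow_nonneg A hA m k k)
      exact ⟨f s, Finset.mem_univ _, hwalk⟩
    rw [htr m hm1 hmN] at htrpos
    exact lt_irrefl 0 htrpos
  have hninj : ¬ Function.Injective (fun t : Fin (N + 1) => f t) := by
    intro hinj
    have := Fintype.card_le_of_injective _ hinj
    simp at this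
  rw [Function.not_injective_iff] at hninj
  obtain ⟨a, b, hab, hne⟩ := hninj
  rcases lt_or_gt_of_ne hne with hlt | hlt
  · exact key a b hlt (Nat.lt_succ_iff.mp b.isLt) hab
  · exact key b a hlt (Nat.lt_succ_iff.mp a.isLt) hab.symm

end aux

theorem stmt_10 (N : ℕ) (A : Matrix (Fin N) (Fin N) ℝ)
    (hA : ∀ i j, 0 ≤ A i j) :
    Matrix.trace ((1 + A) ^ N) = (N : ℝ) ↔ IsNilpotent A := by
  have hexp : Matrix.trace ((1 + A) ^ N)
      = ∑ k ∈ Finset.range (N + 1), (N.choose k : ℝ) * Matrix.trace (A ^ k) := by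
    rw [add_comm, (Commute.one_right A).add_pow N, Matrix.trace_sum]
    congr 1
    ext k
    rw [one_pow, mul_one, ← Nat.cast_comm, ← nsmul_eq_mul, Matrix.trace_smul, nsmul_eq_mul, mul_comm]
  have hsplit : Matrix.trace ((1 + A) ^ N)
      = (∑ i ∈ Finset.range N, (N.choose (i + 1) : ℝ) * Matrix.trace (A ^ (i + 1))) + N := by
    rw [hexp, Finset.sum_range_succ']
    simp [Matrix.trace_one]
  constructor
  · intro h
    rcases Nat.eq_zero_or_pos N with hN | hN
    · subst hN
      exact ⟨1, Subsingleton.elim _ _⟩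
    have hsum : (∑ i ∈ Finset.range N, (N.choose (i + 1) : ℝ) * Matrix.trace (A ^ (i + 1))) = 0 := by
      rw [hsplit] at h; linarith
    have hterms := (Finset.sum_eq_zero_iff_of_nonneg (by
      intro i _
      apply mul_nonneg (by positivity)
      rw [Matrix.trace]
      exact Finset.sum_nonneg fun k _ => aux_pow_nonneg A hA _ k k)).mp hsum
    refine ⟨N, aux_nilpotent A hA ?_⟩
    intro k hk1 hkN
    obtain ⟨i, rfl⟩ : ∃ i, k = i + 1 := ⟨k - 1, by omega⟩
    have hmem : i ∈ Finset.range N := Finset.mem_range.mpr (by omega)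
    have hch : 0 < (N.choose (i + 1) : ℝ) := by
      exact_mod_cast Nat.choose_pos (show i + 1 ≤ N by omega)
    rcases mul_eq_zero.mp (hterms i hmem) with h' | h'
    · exact absurd h' (ne_of_gt hch)
    · exact h'
  · intro h
    rw [hsplit]
    have hz : ∀ i ∈ Finset.range N, (N.choose (i + 1) : ℝ) * Matrix.trace (A ^ (i + 1)) = 0 := by
      intro i _
      have hnil : IsNilpotent (A ^ (i + 1)) := IsNilpotent.pow_succ i h
      rw [(Matrix.isNilpotent_trace_of_isNilpotent hnil).eq_zero, mul_zero]
    rw [Finset.sum_eq_zero hz, zero_add]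
end

section
/- Let A be an N×N real matrix with A∘A nilpotent. Then there exists a permutation matrix P such that PAPᵀ is strictly upper triangular. -/
open Matrix

theorem stmt_15 (N : ℕ) (A : Matrix (Fin N) (Fin N) ℝ)
    (h : IsNilpotent (Matrix.hadamard A A)) :
    ∃ σ : Equiv.Perm (Fin N),
      ∀ P : Matrix (Fin N) (Fin N) ℝ,
        P = Matrix.of (fun i j => if σ i = j then (1 : ℝ) else 0) →
        ∀ i j : Fin N, j ≤ i → (P * A * Pᵀ) i j = 0 := by
  classical
  set B := Matrix.hadamard A A with hB
  obtain ⟨n, hn⟩ := h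
  have hBnn : ∀ a b, 0 ≤ B a b := by
    intro a b
    simp only [hB, Matrix.hadamard_apply]
    exact mul_self_nonneg _
  have hpow : ∀ k, ∀ a b : Fin N, 0 ≤ (B ^ k) a b := by
    intro k
    induction k with
    | zero =>
      intro a b
      simp only [pow_zero, Matrix.one_apply]
      split <;> norm_num
    | succ k ih =>
      intro a b
      rw [pow_succ, Matrix.mul_apply]
      exact Finset.sum_nonneg fun m _ => mul_nonneg (ih a m) (hBnn m b)
  have hstep : ∀ (k : ℕ) (a b c : Fin N),
      0 < (B ^ k) c a → 0 < B a b → 0 < (B ^ (k + 1)) c b := by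
    intro k a b c h1 h2
    rw [pow_succ, Matrix.mul_apply]
    refine lt_of_lt_of_le (mul_pos h1 h2) ?_
    exact Finset.single_le_sum (f := fun m => (B ^ k) c m * B m b)
      (fun m _ => mul_nonneg (hpow k c m) (hBnn m b)) (Finset.mem_univ a)
  have hzero : ∀ m, n ≤ m → (B ^ m) = 0 := by
    intro m hm
    have : B ^ m = B ^ n * B ^ (m - n) := by
      rw [← pow_add]; congr 1; omega
    simp [this, hn]
  set Q : Fin N → ℕ → Prop := fun a k => ∃ c, 0 < (B ^ k) c a with hQdef
  have hQ0 : ∀ a, Q a 0 := by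
    intro a
    exact ⟨a, by simp [Matrix.one_apply]⟩
  have hQbd : ∀ a k, Q a k → k < n := by
    intro a k hk
    obtain ⟨c, hc⟩ := hk
    by_contra hkn
    push_neg at hkn
    rw [hzero k hkn] at hc
    simp at hc
  set f : Fin N → ℕ := fun a => Nat.findGreatest (Q a) n with hf
  have hQf : ∀ a, Q a (f a) := fun a => Nat.findGreatest_spec (Nat.zero_le n) (hQ0 a)
  have hedge : ∀ a b, A a b ≠ 0 → f a < f b := by
    intro a b hab
    have hBab : 0 < B a b := by
      simp only [hB, Matrix.hadamard_apply]
      exact mul_self_pos.mpr hab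
    obtain ⟨c, hc⟩ := hQf a
    have hQb : Q b (f a + 1) := ⟨c, hstep _ _ _ _ hc hBab⟩
    have h1 : f a + 1 < n := hQbd b _ hQb
    have h2 : f a + 1 ≤ f b := Nat.le_findGreatest (le_of_lt h1) hQb
    omega
  set key : Fin N → Lex (ℕ × ℕ) := fun a => toLex (f a, (a : ℕ)) with hkey
  have hkeyinj : Function.Injective key := by
    intro a b hab
    have : ((f a, (a : ℕ)) : ℕ × ℕ) = (f b, (b : ℕ)) := by
      exact congrArg ofLex hab
    have : (a : ℕ) = (b : ℕ) := (Prod.mk.injEq _ _ _ _ ▸ this).2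
    exact Fin.ext this
  set σ := Tuple.sort key with hσ
  have hsm : StrictMono (key ∘ σ) :=
    (Tuple.monotone_sort key).strictMono_of_injective (hkeyinj.comp σ.injective)
  refine ⟨σ, ?_⟩
  intro P hP i j hji
  have hPA : (P * A * Pᵀ) i j = A (σ i) (σ j) := by
    subst hP
    simp [Matrix.mul_apply, Matrix.transpose_apply, ite_mul, mul_ite]
  rw [hPA]
  by_contra hne
  have hflt : f (σ i) < f (σ j) := hedge _ _ hne
  have hk : key (σ i) < key (σ j) := by
    rw [hkey]
    exact Prod.Lex.lt_iff.mpr (Or.inl hflt)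
  have hij : i < j := hsm.lt_iff_lt.mp hk
  exact absurd hji (not_le.mpr hij)
end
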